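/- arXiv:2311.09253 — 5 statements merged into one kernel-verified Lean document; each statement's English description precedes it below -/
import Mathlib

section
/- Suppose the degradation is non-invertible. Fix norms on ℝ^{n_x}, on ℝ^{n_y}, and on the product space ℝ^{n_x} × ℝ^{n_y}, and fix p ≥ 1. Then there exist constants ε₀ > 0 and c > 0, depending only on p_{X,Y}, the chosen norms and p (but not on the estimator), such that: for every measurable function f : ℝ^{n_y} → ℝ^{n_x} that is Lipschitz on the support of p_Y with Lipschitz constant K, if ε := W_p(p_{X,Y}, p_{f(Y),Y}) satisfies 0 < ε ≤ ε₀, then K ≥ c / √ε. Here p_{f(Y),Y} denotes the joint law of the pair (f(Y), Y). -/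
open MeasureTheory ProbabilityTheory
open scoped ENNReal NNReal

/-- The Wasserstein-`p` "distance" between two measures on a normed space `G`, as an `ℝ≥0∞`-valued
infimum over couplings `π` (measures on `G × G` with first marginal `μ` and second marginal `ν`)
of `(∫ ‖u - v‖^p dπ(u,v))^{1/p}`, written with the extended distance `edist u v = ‖u - v‖`. -/
noncomputable def wassersteinDist {G : Type*} [MeasurableSpace G] [NormedAddCommGroup G]
    (p : ℝ) (μ ν : Measure G) : ℝ≥0∞ :=
  ⨅ (π : Measure (G × G)) (_ : π.map Prod.fst = μ) (_ : π.map Prod.snd = ν),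
    (∫⁻ z, edist z.1 z.2 ^ p ∂π) ^ (1 / p)

/-- The support of a measure on a topological space: the set of points all of whose
neighborhoods have positive measure. -/
def measureSupport {α : Type*} [TopologicalSpace α] [MeasurableSpace α] (ν : Measure α) :
    Set α := {x | ∀ U ∈ nhds x, 0 < ν U}


/-!
Non-invertibility yields a set `T` of positive `p_Y`-mass and `r, θ > 0` such that for `y ∈ T`
the conditional law of `X` given `Y = y` puts mass at least `θ` outside every ball of radius `r`.
Hence, whatever `f` is, `‖X - f(Y)‖ > r` with probability at least `γ = θ p_Y(T)`. In a coupling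
of `p_{X,Y}` with `p_{f(Y),Y}`, a pair of points at distance `< δ = r / (1 + K)` would, by the
`K`-Lipschitz bound on the support of `p_Y`, force `‖X - f(Y)‖ < r`; so by Markov's inequality
`W_p ≥ δ γ^{1/p}`, i.e. `1 + K ≥ r γ^{1/p} / ε`, which exceeds `c / √ε` once `ε` is small.
-/

open Set Metric Filter

theorem measureSupport_eq_support {α : Type*} [TopologicalSpace α] [MeasurableSpace α]
    (ν : Measure α) : measureSupport ν = ν.support :=
  Set.ext fun x => (Measure.mem_support_iff_forall x).symm

namespace MeasureTheory.Measure

theorem exists_ne_mem_support_of_forall_ne_dirac {α : Type*} [TopologicalSpace α]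
    [HereditarilyLindelofSpace α] [MeasurableSpace α] (ρ : Measure α) [IsProbabilityMeasure ρ]
    (h : ∀ x, ρ ≠ dirac x) : ∃ a ∈ ρ.support, ∃ b ∈ ρ.support, a ≠ b := by
  by_contra! hsub
  obtain ⟨a, ha⟩ := nonempty_support (IsProbabilityMeasure.ne_zero ρ)
  have hae : (fun x => x) =ᵐ[ρ] fun _ => a := by
    filter_upwards [support_mem_ae (μ := ρ)] with x hx using hsub x hx a ha
  refine h a ?_
  calc ρ = ρ.map (fun x => x) := map_id.symm
    _ = ρ.map (fun _ => a) := map_congr hae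
    _ = dirac a := by simp [map_const]

theorem exists_forall_le_measure_compl_closedBall {α : Type*} [MetricSpace α]
    [HereditarilyLindelofSpace α] [MeasurableSpace α]
    (ρ : Measure α) [IsProbabilityMeasure ρ] (h : ∀ x, ρ ≠ dirac x) :
    ∃ r > 0, ∃ θ > 0, ∀ c, θ ≤ ρ (closedBall c r)ᶜ := by
  obtain ⟨a, ha, b, hb, hab⟩ := ρ.exists_ne_mem_support_of_forall_ne_dirac h
  set s := dist a b / 4 with hs_def
  have hs : 0 < s := by have := dist_pos.2 hab; positivity
  refine ⟨s, hs, min (ρ (ball a s)) (ρ (ball b s)),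
    lt_min ((mem_support_iff_forall a).1 ha _ (ball_mem_nhds a hs))
      ((mem_support_iff_forall b).1 hb _ (ball_mem_nhds b hs)), fun c => ?_⟩
  -- `closedBall c s` cannot meet both `ball a s` and `ball b s`, as `dist a b = 4 * s`.
  rcases le_total (2 * s) (dist c a) with hca | hac
  · exact (min_le_left _ _).trans <| measure_mono <|
      (closedBall_disjoint_ball (by linarith)).subset_compl_left
  · have hcb : 2 * s ≤ dist c b := by linarith [dist_triangle_left a b c]
    exact (min_le_right _ _).trans <| measure_mono <|
      (closedBall_disjoint_ball (by linarith)).subset_compl_left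

end MeasureTheory.Measure

namespace ProbabilityTheory.Kernel

theorem exists_measurableSet_forall_le_measure_compl_closedBall {α β : Type*}
    [MeasurableSpace α] [MetricSpace β] [SecondCountableTopology β] [MeasurableSpace β]
    [OpensMeasurableSpace β] (κ : Kernel α β) [IsMarkovKernel κ] (ν : Measure α) {S : Set α}
    (hS : ν S ≠ 0) (hκS : ∀ y ∈ S, ∀ x, κ y ≠ Measure.dirac x) :
    ∃ T, MeasurableSet T ∧ ν T ≠ 0 ∧
      ∃ r > 0, ∃ θ > 0, θ ≠ ∞ ∧ ∀ y ∈ T, ∀ c, θ ≤ κ y (closedBall c r)ᶜ := by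
  obtain ⟨D, hDc, hDd⟩ := TopologicalSpace.exists_countable_dense β
  -- Testing only centres in the countable dense set `D`, at twice the radius, keeps `G n`
  -- measurable while losing nothing.
  set G : ℕ → Set α := fun n =>
    ⋂ c ∈ D, {y | ((n + 1 : ℕ) : ℝ≥0∞)⁻¹ ≤ κ y (closedBall c (2 / (n + 1)))ᶜ}
  have hGm : ∀ n, MeasurableSet (G n) := fun n => .biInter hDc fun c _ =>
    κ.measurable_coe measurableSet_closedBall.compl measurableSet_Ici
  have hcover : S ⊆ ⋃ n, G n := by
    intro y hy
    obtain ⟨r, hr, θ, hθ, hball⟩ := (κ y).exists_forall_le_measure_compl_closedBall (hκS y hy)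
    have hr_eventually : ∀ᶠ n : ℕ in atTop, 2 / ((n : ℝ) + 1) < r := by
      have := (tendsto_one_div_add_atTop_nhds_zero_nat (𝕜 := ℝ)).const_mul 2
      rw [mul_zero] at this
      simpa only [mul_one_div] using this.eventually (gt_mem_nhds hr)
    have hθ_eventually : ∀ᶠ n : ℕ in atTop, ((n + 1 : ℕ) : ℝ≥0∞)⁻¹ < θ :=
      (ENNReal.tendsto_inv_nat_nhds_zero.comp (tendsto_add_atTop_nat 1)).eventually
        (gt_mem_nhds hθ)
    obtain ⟨n, hnr, hnθ⟩ := (hr_eventually.and hθ_eventually).exists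
    refine mem_iUnion.2 ⟨n, mem_iInter₂.2 fun c _ => hnθ.le.trans ((hball c).trans ?_)⟩
    exact measure_mono (compl_subset_compl.2 (closedBall_subset_closedBall hnr.le))
  obtain ⟨n, hn⟩ : ∃ n, ν (G n) ≠ 0 := by
    by_contra! h0
    exact hS (measure_mono_null hcover (measure_iUnion_null h0))
  refine ⟨G n, hGm n, hn, 1 / (n + 1), by positivity, ((n + 1 : ℕ) : ℝ≥0∞)⁻¹, by simp, by simp,
    fun y hy c => ?_⟩
  obtain ⟨c', hc'D, hcc'⟩ := hDd.exists_dist_lt c (by positivity : (0 : ℝ) < 1 / (n + 1))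
  refine (mem_iInter₂.1 hy c' hc'D).trans (measure_mono (compl_subset_compl.2 ?_))
  have htwo : 2 / ((n : ℝ) + 1) = 1 / (n + 1) + 1 / (n + 1) := by ring
  exact closedBall_subset_closedBall' (by linarith)

end ProbabilityTheory.Kernel

theorem MeasureTheory.Measure.mul_le_compProd_setOf_lt_dist {α β : Type*} [MeasurableSpace α]
    [PseudoMetricSpace β] [SecondCountableTopology β] [MeasurableSpace β]
    [OpensMeasurableSpace β] (ν : Measure α) [SFinite ν] (κ : Kernel α β) [IsSFiniteKernel κ]
    {T : Set α} {r : ℝ} {θ : ℝ≥0∞} (hθ : ∀ y ∈ T, ∀ c, θ ≤ κ y (closedBall c r)ᶜ)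
    {f : α → β} (hf : Measurable f) :
    θ * ν T ≤ (ν ⊗ₘ κ) {q | r < dist q.2 (f q.1)} := by
  have hs : MeasurableSet {q : α × β | r < dist q.2 (f q.1)} :=
    measurableSet_lt measurable_const (measurable_snd.dist (hf.comp measurable_fst))
  have hslice : ∀ y, Prod.mk y ⁻¹' {q : α × β | r < dist q.2 (f q.1)} = (closedBall (f y) r)ᶜ := by
    intro y; ext x; simp
  rw [Measure.compProd_apply hs]
  calc θ * ν T = ∫⁻ _ in T, θ ∂ν := (setLIntegral_const T θ).symm
    _ ≤ ∫⁻ y in T, κ y (Prod.mk y ⁻¹' {q | r < dist q.2 (f q.1)}) ∂ν :=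
        setLIntegral_mono (κ.measurable_kernel_prodMk_left hs) fun y hy => by
          rw [hslice]; exact hθ y hy (f y)
    _ ≤ _ := setLIntegral_le_lintegral _ _

theorem mul_le_map_prodMk_setOf_lt_dist {Ω E F : Type*} [MeasurableSpace Ω] [PseudoMetricSpace E]
    [MeasurableSpace E] [StandardBorelSpace E] [Nonempty E] [SecondCountableTopology E]
    [OpensMeasurableSpace E] [MeasurableSpace F] {P : Measure Ω} [IsFiniteMeasure P]
    {X : Ω → E} {Y : Ω → F} (hX : Measurable X) (hY : Measurable Y) {T : Set F} {r : ℝ}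
    {θ : ℝ≥0∞} (hθ : ∀ y ∈ T, ∀ c, θ ≤ condDistrib X Y P y (closedBall c r)ᶜ) {f : F → E}
    (hf : Measurable f) :
    θ * P.map Y T ≤ P.map (fun ω => (X ω, Y ω)) {q | r < dist q.1 (f q.2)} := by
  have hA : MeasurableSet {q : E × F | r < dist q.1 (f q.2)} :=
    measurableSet_lt measurable_const (measurable_fst.dist (hf.comp measurable_snd))
  have hA' : MeasurableSet {q : F × E | r < dist q.2 (f q.1)} :=
    measurableSet_lt measurable_const (measurable_snd.dist (hf.comp measurable_fst))
  calc θ * P.map Y T ≤ (P.map Y ⊗ₘ condDistrib X Y P) {q | r < dist q.2 (f q.1)} :=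
        (P.map Y).mul_le_compProd_setOf_lt_dist _ hθ hf
    _ = _ := by
        rw [compProd_map_condDistrib hX.aemeasurable, Measure.map_apply (hY.prodMk hX) hA',
          Measure.map_apply (hX.prodMk hY) hA]
        rfl

theorem LipschitzOnWith.dist_le_one_add_mul_dist_of_eq {α β : Type*} [PseudoMetricSpace α]
    [PseudoMetricSpace β] {f : β → α} {K : ℝ≥0} {Z : Set β} (hf : LipschitzOnWith K f Z)
    {q q' : α × β} (hq : q.2 ∈ Z) (hq' : q'.2 ∈ Z) (hgraph : q'.1 = f q'.2) :
    dist q.1 (f q.2) ≤ (1 + K) * dist q q' := by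
  have h1 : dist q.1 q'.1 ≤ dist q q' := le_max_left _ _
  have h2 : dist q'.2 q.2 ≤ dist q q' := dist_comm q.2 q'.2 ▸ le_max_right _ _
  calc dist q.1 (f q.2) ≤ dist q.1 q'.1 + dist (f q'.2) (f q.2) := by
        rw [← hgraph]; exact dist_triangle _ _ _
    _ ≤ dist q q' + K * dist q q' := by
        gcongr; exact (hf.dist_le_mul _ hq' _ hq).trans (by gcongr)
    _ = (1 + K) * dist q q' := by ring

theorem LipschitzOnWith.measure_setOf_lt_dist_le_measure_setOf_le_edist {α β : Type*}
    [PseudoMetricSpace α] [MeasurableSpace α] [PseudoMetricSpace β] [MeasurableSpace β]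
    {f : β → α} {K : ℝ≥0} {Z : Set β} (hf : LipschitzOnWith K f Z) {μ : Measure (α × β)}
    {π : Measure ((α × β) × (α × β))} (hπ : π.map Prod.fst = μ) (hfst : ∀ᵐ z ∂π, z.1.2 ∈ Z)
    (hsnd : ∀ᵐ z ∂π, z.2.2 ∈ Z ∧ z.2.1 = f z.2.2) {r : ℝ}
    (hA : MeasurableSet {q : α × β | r < dist q.1 (f q.2)}) :
    μ {q | r < dist q.1 (f q.2)} ≤ π {z | ENNReal.ofReal (r / (1 + K)) ≤ edist z.1 z.2} := by
  rw [← hπ, Measure.map_apply measurable_fst hA]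
  refine measure_mono_ae ?_
  filter_upwards [hfst, hsnd] with z hz₁ ⟨hz₂, hgraph⟩ (hz : r < dist z.1.1 (f z.1.2))
  have hdist := hf.dist_le_one_add_mul_dist_of_eq hz₁ hz₂ hgraph
  show _ ≤ edist z.1 z.2
  rw [edist_dist]
  refine ENNReal.ofReal_le_ofReal ((div_le_iff₀ (by positivity)).2 ?_)
  linarith [hz.le.trans hdist, mul_comm (1 + (K : ℝ)) (dist z.1 z.2)]

theorem ofReal_mul_rpow_le_wassersteinDist {G : Type*} [NormedAddCommGroup G] [MeasurableSpace G]
    [OpensMeasurableSpace G] [SecondCountableTopology G] {p : ℝ} (hp : 0 < p) {μ ν : Measure G}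
    {δ : ℝ} {m : ℝ≥0∞} (h : ∀ π : Measure (G × G), π.map Prod.fst = μ → π.map Prod.snd = ν →
      m ≤ π {z | ENNReal.ofReal δ ≤ edist z.1 z.2}) :
    ENNReal.ofReal δ * m ^ (1 / p) ≤ wassersteinDist p μ ν := by
  refine le_iInf fun π => le_iInf fun hπ₁ => le_iInf fun hπ₂ => ?_
  have hmeas : Measurable fun z : G × G => edist z.1 z.2 ^ p :=
    (continuous_fst.edist continuous_snd).measurable.pow_const p
  have hmarkov : ENNReal.ofReal δ ^ p * m ≤ ∫⁻ z, edist z.1 z.2 ^ p ∂π :=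
    calc ENNReal.ofReal δ ^ p * m
        ≤ ENNReal.ofReal δ ^ p * π {z | ENNReal.ofReal δ ^ p ≤ edist z.1 z.2 ^ p} := by
          gcongr
          exact (h π hπ₁ hπ₂).trans (measure_mono fun z hz => ENNReal.rpow_le_rpow hz hp.le)
      _ ≤ _ := mul_meas_ge_le_lintegral₀ hmeas.aemeasurable _
  calc ENNReal.ofReal δ * m ^ (1 / p) = (ENNReal.ofReal δ ^ p * m) ^ (1 / p) := by
        rw [ENNReal.mul_rpow_of_nonneg _ _ (by positivity), one_div, ENNReal.rpow_rpow_inv hp.ne']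
    _ ≤ _ := ENNReal.rpow_le_rpow hmarkov (by positivity)

theorem ofReal_mul_rpow_le_wassersteinDist_map_graph {Ω E F : Type*} [MeasurableSpace Ω]
    [NormedAddCommGroup E] [MeasurableSpace E] [OpensMeasurableSpace E] [SecondCountableTopology E]
    [NormedAddCommGroup F] [MeasurableSpace F] [OpensMeasurableSpace F] [SecondCountableTopology F]
    {P : Measure Ω} {X : Ω → E} {Y : Ω → F} (hX : Measurable X) (hY : Measurable Y)
    {f : F → E} {K : ℝ≥0} (hf : Measurable f) (hLip : LipschitzOnWith K f (P.map Y).support)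
    {p : ℝ} (hp : 0 < p) (r : ℝ) :
    ENNReal.ofReal (r / (1 + K)) * P.map (fun ω => (X ω, Y ω)) {q | r < dist q.1 (f q.2)} ^ (1 / p)
      ≤ wassersteinDist p (P.map fun ω => (X ω, Y ω)) (P.map fun ω => (f (Y ω), Y ω)) := by
  have hZ : MeasurableSet (P.map Y).support := Measure.isClosed_support.measurableSet
  have hYZ : ∀ᵐ ω ∂P, Y ω ∈ (P.map Y).support :=
    ae_of_ae_map hY.aemeasurable Measure.support_mem_ae
  have hA : MeasurableSet {q : E × F | r < dist q.1 (f q.2)} :=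
    measurableSet_lt measurable_const (measurable_fst.dist (hf.comp measurable_snd))
  have hgraph : MeasurableSet {q : E × F | q.2 ∈ (P.map Y).support ∧ q.1 = f q.2} :=
    (measurable_snd hZ).inter (measurableSet_eq_fun measurable_fst (hf.comp measurable_snd))
  refine ofReal_mul_rpow_le_wassersteinDist hp fun π hπ₁ hπ₂ =>
    hLip.measure_setOf_lt_dist_le_measure_setOf_le_edist hπ₁ ?_ ?_ hA
  · refine ae_of_ae_map (p := fun q : E × F => q.2 ∈ (P.map Y).support)
      measurable_fst.aemeasurable ?_
    rw [hπ₁]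
    exact (ae_map_iff (hX.prodMk hY).aemeasurable (measurable_snd hZ)).2 hYZ
  · refine ae_of_ae_map (p := fun q : E × F => q.2 ∈ (P.map Y).support ∧ q.1 = f q.2)
      measurable_snd.aemeasurable ?_
    rw [hπ₂]
    refine (ae_map_iff ((hf.comp hY).prodMk hY).aemeasurable hgraph).2 ?_
    filter_upwards [hYZ] with ω hω using ⟨hω, rfl⟩

theorem div_two_div_sqrt_le {β ε k : ℝ} (hε : 0 < ε) (hε₁ : ε ≤ 1) (hεβ : ε ≤ β / 2)
    (h : β ≤ ε * (1 + k)) : β / 2 / √ε ≤ k := by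
  rw [div_le_iff₀ (Real.sqrt_pos.2 hε)]
  have hsqrt_le : √ε ≤ 1 := Real.sqrt_le_one.2 hε₁
  have hsq : √ε * √ε = ε := Real.mul_self_sqrt hε.le
  have hk : 0 ≤ k := by nlinarith
  have : ε * k ≤ k * √ε :=
    calc ε * k = √ε * (√ε * k) := by rw [← mul_assoc, hsq]
      _ ≤ √ε * k := mul_le_of_le_one_left (by positivity) hsqrt_le
      _ = k * √ε := mul_comm _ _
  linarith

/-- **the perception–robustness tradeoff.** Suppose the degradation is
non-invertible, the spaces `ℝ^{n_x}`, `ℝ^{n_y}` and `ℝ^{n_x} × ℝ^{n_y}` carry fixed norms, and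
`p ≥ 1`. Then there exist constants `ε₀ > 0` and `c > 0`, depending only on `p_{X,Y}`, the norms
and `p` (they are chosen before the estimator is quantified), such that for every measurable
`f : ℝ^{n_y} → ℝ^{n_x}` that is Lipschitz with constant `K` on the support of `p_Y`: if
`ε := W_p(p_{X,Y}, p_{f(Y),Y})` satisfies `0 < ε ≤ ε₀`, then `K ≥ c / √ε`. -/
theorem stmt0
    {Ω E F : Type*} [MeasurableSpace Ω]
    [NormedAddCommGroup E] [NormedSpace ℝ E] [FiniteDimensional ℝ E]
    [MeasurableSpace E] [BorelSpace E]
    [NormedAddCommGroup F] [NormedSpace ℝ F] [FiniteDimensional ℝ F]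
    [MeasurableSpace F] [BorelSpace F]
    (P : Measure Ω) [IsProbabilityMeasure P]
    (X : Ω → E) (Y : Ω → F) (hX : Measurable X) (hY : Measurable Y)
    (p : ℝ) (hp : 1 ≤ p)
    (hni : ∃ S : Set F, MeasurableSet S ∧ 0 < P (Y ⁻¹' S) ∧
      ∀ y ∈ S, ∀ x : E, condDistrib X Y P y ≠ Measure.dirac x) :
    ∃ ε₀ c : ℝ, 0 < ε₀ ∧ 0 < c ∧
      ∀ (f : F → E) (K : ℝ≥0), Measurable f →
        LipschitzOnWith K f (measureSupport (P.map Y)) →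
        0 < wassersteinDist p (P.map (fun ω => (X ω, Y ω)))
              (P.map (fun ω => (f (Y ω), Y ω))) →
        wassersteinDist p (P.map (fun ω => (X ω, Y ω)))
              (P.map (fun ω => (f (Y ω), Y ω))) ≤ ENNReal.ofReal ε₀ →
        c / Real.sqrt (wassersteinDist p (P.map (fun ω => (X ω, Y ω)))
              (P.map (fun ω => (f (Y ω), Y ω)))).toReal ≤ (K : ℝ) := by
  have hp₀ : 0 < p := one_pos.trans_le hp
  obtain ⟨S, -, hPS, hS⟩ := hni
  have hS_ne : P.map Y S ≠ 0 := (hPS.trans_le (Measure.le_map_apply hY.aemeasurable S)).ne'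
  obtain ⟨T, -, hT_ne, r, hr, θ, hθ, hθ_top, hspread⟩ :=
    (condDistrib X Y P).exists_measurableSet_forall_le_measure_compl_closedBall _ hS_ne hS
  have hγ_top : θ * P.map Y T ≠ ∞ := ENNReal.mul_ne_top hθ_top (measure_ne_top _ _)
  set β := r * ((θ * P.map Y T) ^ (1 / p)).toReal
  have hβ : 0 < β := mul_pos hr <| ENNReal.toReal_pos
    (ENNReal.rpow_pos (ENNReal.mul_pos hθ.ne' hT_ne) hγ_top).ne'
    (ENNReal.rpow_ne_top_of_nonneg (by positivity) hγ_top)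
  refine ⟨min 1 (β / 2), β / 2, by positivity, by positivity, fun f K hf hLip hpos hle => ?_⟩
  rw [measureSupport_eq_support] at hLip
  set W := wassersteinDist p (P.map fun ω => (X ω, Y ω)) (P.map fun ω => (f (Y ω), Y ω))
  have hW : ENNReal.ofReal (r / (1 + K)) * (θ * P.map Y T) ^ (1 / p) ≤ W := by
    refine le_trans ?_ (ofReal_mul_rpow_le_wassersteinDist_map_graph hX hY hf hLip hp₀ r)
    gcongr
    exact mul_le_map_prodMk_setOf_lt_dist hX hY hspread hf
  have hW_top : W ≠ ∞ := ne_top_of_le_ne_top ENNReal.ofReal_ne_top hle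
  have hW_le : W.toReal ≤ min 1 (β / 2) := ENNReal.toReal_le_of_le_ofReal (by positivity) hle
  have hβW : β ≤ W.toReal * (1 + K) := by
    have := ENNReal.toReal_mono hW_top hW
    rwa [ENNReal.toReal_mul, ENNReal.toReal_ofReal (by positivity), div_mul_eq_mul_div,
      div_le_iff₀ (by positivity)] at this
  exact div_two_div_sqrt_le (ENNReal.toReal_pos hpos.ne' hW_top) (hW_le.trans (min_le_left _ _))
    (hW_le.trans (min_le_right _ _)) hβW
end

section
/- If the degradation is non-invertible, then there exists β > 0 such that the degradation is β-ill-posed. -/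
/-!
A probability measure that is not a Dirac mass has two distinct points in its support, and
around them sit two sets of a fixed countable basis that have positive measure and lie at
positive distance from each other. Hence `S` is covered by countably many measurable sets of
measurements `y`, one for each pair of separated basis sets, namely those `y` for which
`p_{X|Y}(·|y)` charges both sets of the pair. As `P(Y ∈ S) > 0`, one of them has positive
probability, and its pair of basis sets serves as `Q₁`, `Q₂`.
-/

open MeasureTheory ProbabilityTheory TopologicalSpace Metric

namespace MeasureTheory

lemma Measure.support_nontrivial_of_forall_ne_dirac {X : Type*} [TopologicalSpace X]
    [HereditarilyLindelofSpace X] [MeasurableSpace X] {μ : Measure X} [IsProbabilityMeasure μ]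
    (h : ∀ x, μ ≠ dirac x) : μ.support.Nontrivial := by
  by_contra hsub
  obtain ⟨x, hx⟩ := nonempty_support (IsProbabilityMeasure.ne_zero μ)
  have hae : id =ᵐ[μ] fun _ ↦ x := by
    filter_upwards [support_mem_ae] with y hy
    exact Set.not_nontrivial_iff.1 hsub hy hx
  exact h x (by simpa using (hasLaw_dirac_of_ae_eq hae).map_eq)

lemma exists_mem_measure_pos_of_subset_biUnion {α ι : Type*} [MeasurableSpace α]
    {μ : Measure α} {I : Set ι} (hI : I.Countable) {s : Set α} {t : ι → Set α}
    (hs : 0 < μ s) (hst : s ⊆ ⋃ i ∈ I, t i) : ∃ i ∈ I, 0 < μ (t i) := by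
  by_contra! h
  exact hs.ne' <| measure_mono_null hst <|
    (measure_biUnion_null_iff hI).2 fun i hi ↦ nonpos_iff_eq_zero.1 (h i hi)

end MeasureTheory

lemma TopologicalSpace.IsTopologicalBasis.exists_separated_measure_pos {X : Type*}
    [MetricSpace X] [MeasurableSpace X] {B : Set (Set X)} (hB : IsTopologicalBasis B)
    {μ : Measure X} {x₁ x₂ : X} (hx₁ : x₁ ∈ μ.support) (hx₂ : x₂ ∈ μ.support) (hne : x₁ ≠ x₂) :
    ∃ U ∈ B, ∃ V ∈ B, (∃ β > 0, ∀ u ∈ U, ∀ v ∈ V, β ≤ dist u v) ∧ 0 < μ U ∧ 0 < μ V := by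
  set ε := dist x₁ x₂ / 3 with hε_def
  have hε : 0 < ε := by have := dist_pos.2 hne; positivity
  obtain ⟨U, hUB, hxU, hU⟩ := hB.exists_subset_of_mem_open (mem_ball_self hε) isOpen_ball
  obtain ⟨V, hVB, hxV, hV⟩ := hB.exists_subset_of_mem_open (mem_ball_self hε) isOpen_ball
  refine ⟨U, hUB, V, hVB, ⟨ε, hε, fun u hu v hv ↦ ?_⟩,
    (Measure.mem_support_iff_forall x₁).1 hx₁ U ((hB.isOpen hUB).mem_nhds hxU),
    (Measure.mem_support_iff_forall x₂).1 hx₂ V ((hB.isOpen hVB).mem_nhds hxV)⟩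
  have hu₁ : dist x₁ u < ε := by rw [dist_comm]; exact hU hu
  have hv₂ : dist v x₂ < ε := hV hv
  linarith [dist_triangle4 x₁ u v x₂, hε_def]

theorem stmt1_general
    {Ω E F : Type*} [MeasurableSpace Ω]
    [NormedAddCommGroup E] [NormedSpace ℝ E] [FiniteDimensional ℝ E]
    [MeasurableSpace E] [BorelSpace E]
    [MeasurableSpace F]
    (P : Measure Ω) [IsProbabilityMeasure P]
    (X : Ω → E) (Y : Ω → F)
    (hni : ∃ S : Set F, MeasurableSet S ∧ 0 < P (Y ⁻¹' S) ∧
      ∀ y ∈ S, ∀ x : E, condDistrib X Y P y ≠ Measure.dirac x) :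
    ∃ β : ℝ, 0 < β ∧ ∃ Sy : Set F, MeasurableSet Sy ∧ 0 < P (Y ⁻¹' Sy) ∧
      ∀ y ∈ Sy, ∃ Q₁ Q₂ : Set E, MeasurableSet Q₁ ∧ MeasurableSet Q₂ ∧
        0 < condDistrib X Y P y Q₁ ∧ 0 < condDistrib X Y P y Q₂ ∧
        ∀ x₁ ∈ Q₁, ∀ x₂ ∈ Q₂, β ≤ ‖x₁ - x₂‖ := by
  obtain ⟨S, -, hSpos, hnd⟩ := hni
  set κ := condDistrib X Y P
  set B := countableBasis E
  let I : Set (Set E × Set E) := {UV | UV.1 ∈ B ∧ UV.2 ∈ B ∧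
    ∃ β > 0, ∀ x₁ ∈ UV.1, ∀ x₂ ∈ UV.2, β ≤ dist x₁ x₂}
  let charges (UV : Set E × Set E) : Set F := {y | 0 < κ y UV.1 ∧ 0 < κ y UV.2}
  have hI : I.Countable := ((countable_countableBasis E).prod (countable_countableBasis E)).mono
    fun _ h ↦ Set.mk_mem_prod h.1 h.2.1
  have hcover : Y ⁻¹' S ⊆ ⋃ UV ∈ I, Y ⁻¹' charges UV := by
    intro ω hω
    obtain ⟨x₁, hx₁, x₂, hx₂, hne⟩ :=
      Measure.support_nontrivial_of_forall_ne_dirac (hnd _ hω)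
    obtain ⟨U, hU, V, hV, hsep, hμU, hμV⟩ :=
      (isBasis_countableBasis E).exists_separated_measure_pos hx₁ hx₂ hne
    exact Set.mem_biUnion (x := (U, V)) ⟨hU, hV, hsep⟩ ⟨hμU, hμV⟩
  obtain ⟨⟨U, V⟩, ⟨hU, hV, β, hβ, hsep⟩, hpos⟩ :=
    exists_mem_measure_pos_of_subset_biUnion hI hSpos hcover
  have hUm := (isOpen_of_mem_countableBasis hU).measurableSet
  have hVm := (isOpen_of_mem_countableBasis hV).measurableSet
  refine ⟨β, hβ, charges (U, V),
    (measurableSet_lt measurable_const (κ.measurable_coe hUm)).inter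
      (measurableSet_lt measurable_const (κ.measurable_coe hVm)), hpos,
    fun y hy ↦ ⟨U, V, hUm, hVm, hy.1, hy.2,
      fun x₁ hx₁ x₂ hx₂ ↦ (hsep x₁ hx₁ x₂ hx₂).trans_eq (dist_eq_norm _ _)⟩⟩

/-- If the degradation is non-invertible (there is a set `S` of measurements
with positive probability on which the regular conditional distribution `p_{X|Y}(·|y)` is not a
Dirac measure), then there exists `β > 0` such that the degradation is `β`-ill-posed: there is a
measurable set `Sy` with `P(Y ∈ Sy) > 0` such that for every `y ∈ Sy` there are measurable sets
`Q₁, Q₂` each of positive conditional probability, with `‖x₁ - x₂‖ ≥ β` for all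
`x₁ ∈ Q₁, x₂ ∈ Q₂`. -/
theorem stmt1
    {Ω E F : Type*} [MeasurableSpace Ω]
    [NormedAddCommGroup E] [NormedSpace ℝ E] [FiniteDimensional ℝ E]
    [MeasurableSpace E] [BorelSpace E]
    [NormedAddCommGroup F] [NormedSpace ℝ F] [FiniteDimensional ℝ F]
    [MeasurableSpace F] [BorelSpace F]
    (P : Measure Ω) [IsProbabilityMeasure P]
    (X : Ω → E) (Y : Ω → F) (hX : Measurable X) (hY : Measurable Y)
    (hni : ∃ S : Set F, MeasurableSet S ∧ 0 < P (Y ⁻¹' S) ∧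
      ∀ y ∈ S, ∀ x : E, condDistrib X Y P y ≠ Measure.dirac x) :
    ∃ β : ℝ, 0 < β ∧ ∃ Sy : Set F, MeasurableSet Sy ∧ 0 < P (Y ⁻¹' Sy) ∧
      ∀ y ∈ Sy, ∃ Q₁ Q₂ : Set E, MeasurableSet Q₁ ∧ MeasurableSet Q₂ ∧
        0 < condDistrib X Y P y Q₁ ∧ 0 < condDistrib X Y P y Q₂ ∧
        ∀ x₁ ∈ Q₁, ∀ x₂ ∈ Q₂, β ≤ ‖x₁ - x₂‖ :=
  stmt1_general P X Y hni
end

section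
/- Suppose the degradation is non-invertible. Then for every measurable function f : ℝ^{n_y} → ℝ^{n_x}, the joint law of (f(Y), Y) is different from the joint law of (X, Y); that is, no deterministic estimator X̂ = f(Y) can satisfy p_{X̂,Y} = p_{X,Y}. -/
/-!
If `(f (Y), Y)` and `(X, Y)` had the same joint law, then `X` and `f (Y)` would have the same
conditional distribution given `Y`. The conditional distribution of `f (Y)` given `Y` is the
Dirac mass at `f y` for almost every `y`, so `p_{X|Y}(·|y)` would be a Dirac measure outside a
null set, which cannot contain the set `S` of positive measure.
-/

open MeasureTheory ProbabilityTheory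

namespace ProbabilityTheory

variable {α α' β Ω : Type*} [MeasurableSpace Ω] [StandardBorelSpace Ω] [Nonempty Ω]
  [MeasurableSpace β] {mα : MeasurableSpace α} {mα' : MeasurableSpace α'}

lemma condDistrib_eq_of_map_prodMk_eq {μ : Measure α} [IsFiniteMeasure μ]
    {ν : Measure α'} [IsFiniteMeasure ν] {X : α → β} {Y : α → Ω} {X' : α' → β} {Y' : α' → Ω}
    (h : μ.map (fun a => (X a, Y a)) = ν.map (fun a => (X' a, Y' a))) :
    condDistrib Y X μ = condDistrib Y' X' ν := by
  simp_rw [condDistrib, h]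

end ProbabilityTheory

theorem stmt6_general
    {Ω E F : Type*} [MeasurableSpace Ω]
    [NormedAddCommGroup E] [NormedSpace ℝ E] [FiniteDimensional ℝ E]
    [MeasurableSpace E] [BorelSpace E]
    [MeasurableSpace F]
    (P : Measure Ω) [IsProbabilityMeasure P]
    (X : Ω → E) (Y : Ω → F) (hX : Measurable X) (hY : Measurable Y)
    (hni : ∃ S : Set F, MeasurableSet S ∧ 0 < P (Y ⁻¹' S) ∧
      ∀ y ∈ S, ∀ x : E, condDistrib X Y P y ≠ Measure.dirac x) :
    ∀ f : F → E, Measurable f →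
      P.map (fun ω => (f (Y ω), Y ω)) ≠ P.map (fun ω => (X ω, Y ω)) := by
  intro f hf hlaw
  obtain ⟨S, hS, hSpos, hnotDirac⟩ := hni
  have hswap : P.map (fun ω => (Y ω, X ω)) = P.map (fun ω => (Y ω, (f ∘ Y) ω)) := by
    have := congrArg (Measure.map Prod.swap) hlaw
    rwa [Measure.map_map measurable_swap (by fun_prop : Measurable fun ω => (f (Y ω), Y ω)),
      Measure.map_map measurable_swap (hX.prodMk hY), eq_comm] at this
  have hdet : condDistrib X Y P =ᵐ[P.map Y] Kernel.deterministic f hf := by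
    rw [condDistrib_eq_of_map_prodMk_eq hswap]
    exact condDistrib_comp_self Y hf
  obtain ⟨y, hyS, hy⟩ := Measure.exists_mem_of_measure_ne_zero_of_ae
    (by rw [Measure.map_apply hY hS]; exact hSpos.ne') (ae_restrict_of_ae hdet)
  exact hnotDirac y hyS (f y) (by rw [hy, Kernel.deterministic_apply])

/-- If the degradation is non-invertible, then no deterministic estimator
`X̂ = f(Y)` can satisfy `p_{X̂,Y} = p_{X,Y}`: for every measurable `f`, the joint law of
`(f(Y), Y)` differs from the joint law of `(X, Y)`. -/
theorem stmt6
    {Ω E F : Type*} [MeasurableSpace Ω]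
    [NormedAddCommGroup E] [NormedSpace ℝ E] [FiniteDimensional ℝ E]
    [MeasurableSpace E] [BorelSpace E]
    [NormedAddCommGroup F] [NormedSpace ℝ F] [FiniteDimensional ℝ F]
    [MeasurableSpace F] [BorelSpace F]
    (P : Measure Ω) [IsProbabilityMeasure P]
    (X : Ω → E) (Y : Ω → F) (hX : Measurable X) (hY : Measurable Y)
    (hni : ∃ S : Set F, MeasurableSet S ∧ 0 < P (Y ⁻¹' S) ∧
      ∀ y ∈ S, ∀ x : E, condDistrib X Y P y ≠ Measure.dirac x) :
    ∀ f : F → E, Measurable f →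
      P.map (fun ω => (f (Y ω), Y ω)) ≠ P.map (fun ω => (X ω, Y ω)) :=
  stmt6_general P X Y hX hY hni
end

section
/- Suppose the degradation is non-invertible, fix a norm on ℝ^{n_x} × ℝ^{n_y} and p ≥ 1. Then for every measurable function f : ℝ^{n_y} → ℝ^{n_x}, the Wasserstein-p distance between the joint law of (X, Y) and the joint law of (f(Y), Y) is strictly positive: W_p(p_{X,Y}, p_{f(Y),Y}) > 0 (possibly +∞). -/
/-!
If `f(Y)` had the same joint law with `Y` as `X`, then by uniqueness of disintegration the
conditional law of `X` given `Y` would be the Dirac mass at `f(Y)` almost surely, which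
non-invertibility forbids. So the two joint laws `μ ≠ ν` are at positive Lévy–Prokhorov distance:
some measurable `B` and `ε > 0` satisfy `ν(B^ε) + ε < μ(B)` (or the same with `μ`, `ν` swapped).
Any coupling of `μ` and `ν` must then move mass more than `ε` by a distance at least `ε`, so its
`p`-cost is at least `ε^(p+1)`.
-/

open MeasureTheory ProbabilityTheory
open scoped ENNReal

open Metric

lemma measure_le_coupling_add {α β : Type*} [MeasurableSpace α] [MeasurableSpace β]
    {μ : Measure α} {ν : Measure β} {π : Measure (α × β)} (h1 : π.map Prod.fst = μ)
    (h2 : π.map Prod.snd = ν) {B : Set α} {T : Set β} (hB : MeasurableSet B)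
    (hT : MeasurableSet T) :
    μ B ≤ π (Prod.fst ⁻¹' B ∩ (Prod.snd ⁻¹' T)ᶜ) + ν T :=
  calc μ B = π (Prod.fst ⁻¹' B) := by rw [← h1, Measure.map_apply measurable_fst hB]
    _ ≤ π ((Prod.fst ⁻¹' B ∩ (Prod.snd ⁻¹' T)ᶜ) ∪ Prod.snd ⁻¹' T) :=
      measure_mono fun z hz => by by_cases h : z.2 ∈ T <;> simp_all
    _ ≤ π (Prod.fst ⁻¹' B ∩ (Prod.snd ⁻¹' T)ᶜ) + π (Prod.snd ⁻¹' T) := measure_union_le _ _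
    _ = π (Prod.fst ⁻¹' B ∩ (Prod.snd ⁻¹' T)ᶜ) + ν T := by
      rw [← h2, Measure.map_apply measurable_snd hT]

section LevyProkhorov

variable {α : Type*} [PseudoEMetricSpace α] [MeasurableSpace α] [BorelSpace α]
  {μ ν : Measure α} [IsFiniteMeasure μ] [IsFiniteMeasure ν]

lemma eq_of_levyProkhorovEDist_eq_zero (h : levyProkhorovEDist μ ν = 0) : μ = ν := by
  have hclosed (A : Set α) (hA : IsClosed A) : μ A = ν A :=
    measure_eq_measure_of_levyProkhorovEDist_eq_zero_of_isClosed h hA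
      ⟨1, one_pos, measure_ne_top _ _⟩ ⟨1, one_pos, measure_ne_top _ _⟩
  refine ext_of_generate_finite _ ?_ isPiSystem_isClosed hclosed (hclosed _ isClosed_univ)
  rw [BorelSpace.measurable_eq (α := α), borel_eq_generateFrom_isClosed]

lemma exists_measure_thickening_add_lt_of_ne (h : μ ≠ ν) :
    ∃ ε : ℝ≥0∞, 0 < ε ∧ ε ≠ ∞ ∧ ∃ B, MeasurableSet B ∧
      (ν (thickening ε.toReal B) + ε < μ B ∨ μ (thickening ε.toReal B) + ε < ν B) := by
  have hL : levyProkhorovEDist μ ν ≠ 0 := mt eq_of_levyProkhorovEDist_eq_zero h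
  have hLtop := levyProkhorovEDist_ne_top μ ν
  refine ⟨levyProkhorovEDist μ ν / 2, ENNReal.half_pos hL, ENNReal.div_ne_top hLtop two_ne_zero,
    ?_⟩
  by_contra! hcon
  exact (ENNReal.half_lt_self hL hLtop).not_ge (sInf_le fun B hB => hcon B hB)

end LevyProkhorov

section Wasserstein

variable {G : Type*} [NormedAddCommGroup G] [MeasurableSpace G] {μ ν : Measure G} {p : ℝ}

lemma wassersteinDist_le_swap : wassersteinDist p ν μ ≤ wassersteinDist p μ ν := by
  refine le_iInf fun π => le_iInf fun h1 => le_iInf fun h2 => ?_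
  refine iInf_le_of_le (π.map Prod.swap) <| iInf_le_of_le ?_ <| iInf_le_of_le ?_ ?_
  · exact (Measure.map_map measurable_fst measurable_swap).trans h2
  · exact (Measure.map_map measurable_snd measurable_swap).trans h1
  · rw [show π.map Prod.swap = π.map MeasurableEquiv.prodComm from rfl, lintegral_map_equiv]
    simp [MeasurableEquiv.prodComm, edist_comm]

lemma wassersteinDist_comm : wassersteinDist p μ ν = wassersteinDist p ν μ :=
  le_antisymm wassersteinDist_le_swap wassersteinDist_le_swap

lemma rpow_mul_measure_le_lintegral_edist_rpow (π : Measure (G × G)) {A : Set (G × G)}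
    (hA : MeasurableSet A) {ε : ℝ≥0∞} (hεA : ∀ z ∈ A, ε ≤ edist z.1 z.2) (hp : 0 ≤ p) :
    ε ^ p * π A ≤ ∫⁻ z, edist z.1 z.2 ^ p ∂π :=
  calc ε ^ p * π A = ∫⁻ _ in A, ε ^ p ∂π := (setLIntegral_const A _).symm
    _ ≤ ∫⁻ z in A, edist z.1 z.2 ^ p ∂π :=
      setLIntegral_mono' hA fun z hz => ENNReal.rpow_le_rpow (hεA z hz) hp
    _ ≤ ∫⁻ z, edist z.1 z.2 ^ p ∂π := setLIntegral_le_lintegral A _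

variable [BorelSpace G]

lemma rpow_mul_le_lintegral_edist_rpow_of_lt {π : Measure (G × G)} (h1 : π.map Prod.fst = μ)
    (h2 : π.map Prod.snd = ν) {ε : ℝ≥0∞} (hε : ε ≠ ∞) {B : Set G} (hB : MeasurableSet B)
    (hgap : ν (thickening ε.toReal B) + ε < μ B) (hp : 0 ≤ p) :
    ε ^ p * ε ≤ ∫⁻ z, edist z.1 z.2 ^ p ∂π := by
  set T := thickening ε.toReal B
  have hT : MeasurableSet T := isOpen_thickening.measurableSet
  have hfar : ∀ z ∈ Prod.fst ⁻¹' B ∩ (Prod.snd ⁻¹' T)ᶜ, ε ≤ edist z.1 z.2 := by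
    rintro ⟨x, y⟩ ⟨hx, hy⟩
    calc ε = ENNReal.ofReal ε.toReal := (ENNReal.ofReal_toReal hε).symm
      _ ≤ infEDist y B := by simpa [T, mem_thickening_iff_infEDist_lt] using hy
      _ ≤ edist y x := infEDist_le_edist_of_mem hx
      _ = edist x y := edist_comm y x
  have hmass : ε < π (Prod.fst ⁻¹' B ∩ (Prod.snd ⁻¹' T)ᶜ) := by
    have hνT : ν T ≠ ∞ := ne_top_of_lt (lt_of_le_of_lt le_self_add hgap)
    refine (ENNReal.add_lt_add_iff_left hνT).mp (hgap.trans_le ?_)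
    exact (measure_le_coupling_add h1 h2 hB hT).trans_eq (add_comm _ _)
  calc ε ^ p * ε ≤ ε ^ p * π (Prod.fst ⁻¹' B ∩ (Prod.snd ⁻¹' T)ᶜ) := by gcongr
    _ ≤ ∫⁻ z, edist z.1 z.2 ^ p ∂π :=
      rpow_mul_measure_le_lintegral_edist_rpow π
        ((measurable_fst hB).inter (measurable_snd hT).compl) hfar hp

lemma rpow_le_wassersteinDist_of_lt {ε : ℝ≥0∞} (hε : ε ≠ ∞) {B : Set G} (hB : MeasurableSet B)
    (hgap : ν (thickening ε.toReal B) + ε < μ B) (hp : 0 ≤ p) :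
    (ε ^ p * ε) ^ (1 / p) ≤ wassersteinDist p μ ν :=
  le_iInf fun _ => le_iInf fun h1 => le_iInf fun h2 =>
    ENNReal.rpow_le_rpow (rpow_mul_le_lintegral_edist_rpow_of_lt h1 h2 hε hB hgap hp)
      (by positivity)

lemma wassersteinDist_pos_of_ne [IsFiniteMeasure μ] [IsFiniteMeasure ν] (h : μ ≠ ν)
    (hp : 0 ≤ p) : 0 < wassersteinDist p μ ν := by
  obtain ⟨ε, hε0, hε, B, hB, hgap⟩ := exists_measure_thickening_add_lt_of_ne h
  have hpos : 0 < (ε ^ p * ε) ^ (1 / p) :=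
    ENNReal.rpow_pos (ENNReal.mul_pos (ENNReal.rpow_pos hε0 hε).ne' hε0.ne')
      (ENNReal.mul_ne_top (ENNReal.rpow_ne_top_of_nonneg hp hε) hε)
  rcases hgap with hgap | hgap
  · exact hpos.trans_le (rpow_le_wassersteinDist_of_lt hε hB hgap hp)
  · rw [wassersteinDist_comm]
    exact hpos.trans_le (rpow_le_wassersteinDist_of_lt hε hB hgap hp)

end Wasserstein

lemma condDistrib_ae_eq_deterministic_of_map_eq {α β Ω : Type*} [MeasurableSpace α]
    [MeasurableSpace β] [MeasurableSpace Ω] [StandardBorelSpace Ω] [Nonempty Ω]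
    {μ : Measure α} [IsFiniteMeasure μ] {X : α → Ω} {Y : α → β} (hX : Measurable X)
    (hY : Measurable Y) {f : β → Ω} (hf : Measurable f)
    (h : μ.map (fun a => (X a, Y a)) = μ.map (fun a => (f (Y a), Y a))) :
    condDistrib X Y μ =ᵐ[μ.map Y] Kernel.deterministic f hf := by
  refine (condDistrib_ae_eq_iff_measure_eq_compProd Y hX.aemeasurable _).mpr ?_
  calc μ.map (fun a => (Y a, X a)) = (μ.map (fun a => (X a, Y a))).map Prod.swap :=
        (Measure.map_map measurable_swap (hX.prodMk hY)).symm
    _ = (μ.map (fun a => (f (Y a), Y a))).map Prod.swap := by rw [h]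
    _ = (μ.map Y).map (fun y => (y, f y)) :=
      (Measure.map_map measurable_swap ((hf.comp hY).prodMk hY)).trans
        (Measure.map_map (measurable_id.prodMk hf) hY).symm
    _ = μ.map Y ⊗ₘ Kernel.deterministic f hf := (Measure.compProd_deterministic hf).symm

theorem stmt7_general
    {Ω E F : Type*} [MeasurableSpace Ω]
    [NormedAddCommGroup E] [NormedSpace ℝ E] [FiniteDimensional ℝ E]
    [MeasurableSpace E] [BorelSpace E]
    [NormedAddCommGroup F]
    [MeasurableSpace F] [BorelSpace F]
    (P : Measure Ω) [IsProbabilityMeasure P]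
    (X : Ω → E) (Y : Ω → F) (hX : Measurable X) (hY : Measurable Y)
    (p : ℝ) (hp : 1 ≤ p)
    (hni : ∃ S : Set F, MeasurableSet S ∧ 0 < P (Y ⁻¹' S) ∧
      ∀ y ∈ S, ∀ x : E, condDistrib X Y P y ≠ Measure.dirac x) :
    ∀ f : F → E, Measurable f →
      0 < wassersteinDist p (P.map (fun ω => (X ω, Y ω)))
        (P.map (fun ω => (f (Y ω), Y ω))) := by
  intro f hf
  refine wassersteinDist_pos_of_ne (fun hlaw => ?_) (zero_le_one.trans hp)
  obtain ⟨S, hS, hSpos, hnotDirac⟩ := hni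
  have hSpos' : P.map Y S ≠ 0 := by rw [Measure.map_apply hY hS]; exact hSpos.ne'
  obtain ⟨y, hyS, hy⟩ := Measure.exists_mem_of_measure_ne_zero_of_ae hSpos'
    (ae_restrict_of_ae (condDistrib_ae_eq_deterministic_of_map_eq hX hY hf hlaw))
  exact hnotDirac y hyS (f y) (by rw [hy, Kernel.deterministic_apply])

/-- If the degradation is non-invertible, then for every measurable
`f : ℝ^{n_y} → ℝ^{n_x}`, the Wasserstein-`p` distance between the joint law of `(X, Y)` and the
joint law of `(f(Y), Y)` is strictly positive (possibly `+∞`). -/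
theorem stmt7
    {Ω E F : Type*} [MeasurableSpace Ω]
    [NormedAddCommGroup E] [NormedSpace ℝ E] [FiniteDimensional ℝ E]
    [MeasurableSpace E] [BorelSpace E]
    [NormedAddCommGroup F] [NormedSpace ℝ F] [FiniteDimensional ℝ F]
    [MeasurableSpace F] [BorelSpace F]
    (P : Measure Ω) [IsProbabilityMeasure P]
    (X : Ω → E) (Y : Ω → F) (hX : Measurable X) (hY : Measurable Y)
    (p : ℝ) (hp : 1 ≤ p)
    (hni : ∃ S : Set F, MeasurableSet S ∧ 0 < P (Y ⁻¹' S) ∧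
      ∀ y ∈ S, ∀ x : E, condDistrib X Y P y ≠ Measure.dirac x) :
    ∀ f : F → E, Measurable f →
      0 < wassersteinDist p (P.map (fun ω => (X ω, Y ω)))
        (P.map (fun ω => (f (Y ω), Y ω))) :=
  stmt7_general P X Y hX hY p hp hni
end

section
/- Let X and X̂ be square-integrable real-valued random variables and let Y be a random vector, all on the same probability space, such that X and X̂ are conditionally independent given the σ-algebra generated by Y. If moreover X̂ is a posterior sampler, i.e. the regular conditional distributions satisfy p_{X̂|Y}(·|y) = p_{X|Y}(·|y) for p_Y-almost every y, then almost surely E[(X − X̂)² | Y] = 2·(E[X² | Y] − (E[X | Y])²), i.e. the conditional mean squared error of X̂ equals twice the conditional variance of X given Y. -/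
/-!
If `X̂` is a posterior sampler, then `X̂` and `X` have the same conditional law given `Y`, hence
the same conditional first and second moments. Conditional independence factorises the cross
term, `E[X X̂ | Y] = E[X | Y] E[X̂ | Y]`, and expanding the square gives
`E[X² | Y] - 2 E[X | Y]² + E[X² | Y]`.

Conditional independence is only assumed for bounded test functions. It is extended to
square-integrable variables one factor at a time: for a truncation `Tₙ V` of `V`,
`E[U · Tₙ V | Y] = E[U | Y] E[Tₙ V | Y] = E[E[U | Y] · Tₙ V | Y]` by the pull-out property, and
both sides pass to the limit by dominated convergence, since `|U · Tₙ V| ≤ |U V|` and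
`|E[U | Y] · Tₙ V| ≤ |E[U | Y] V|` are integrable by Cauchy–Schwarz.
-/

open MeasureTheory ProbabilityTheory Filter Topology

theorem ProbabilityTheory.tendsto_truncation {α : Type*} (f : α → ℝ) (x : α) :
    Tendsto (fun n : ℕ => truncation f n x) atTop (𝓝 (f x)) := by
  refine tendsto_const_nhds.congr' ?_
  filter_upwards [eventually_gt_atTop ⌈|f x|⌉₊] with n hn
  exact (truncation_eq_self ((Nat.le_ceil _).trans_lt (by exact_mod_cast hn))).symm

theorem ProbabilityTheory.measurable_truncation_id (A : ℝ) : Measurable (truncation id A) :=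
  (measurable_id.indicator measurableSet_Ioc).comp measurable_id

section
variable {Ω : Type*} {m mΩ : MeasurableSpace Ω} {P : Measure Ω}

theorem MeasureTheory.MemLp.truncation {f : Ω → ℝ} (hf : MemLp f 2 P) (A : ℝ) :
    MemLp (truncation f A) 2 P :=
  hf.mono hf.1.truncation (.of_forall fun x => by
    simpa only [Real.norm_eq_abs] using abs_truncation_le_abs_self f A x)

theorem condExp_sub_sq {U V : Ω → ℝ} (hU : MemLp U 2 P) (hV : MemLp V 2 P) :
    P[fun ω => (U ω - V ω) ^ 2 | m] =ᵐ[P]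
      fun ω => P[fun ω' => U ω' ^ 2 | m] ω - 2 * P[U * V | m] ω + P[fun ω' => V ω' ^ 2 | m] ω := by
  have hUV : Integrable (U * V) P := hU.integrable_mul hV
  have expand : (fun ω => (U ω - V ω) ^ 2) =
      (fun ω => U ω ^ 2) - (2 : ℝ) • (U * V) + fun ω => V ω ^ 2 := by
    ext ω
    simp only [Pi.add_apply, Pi.sub_apply, Pi.smul_apply, Pi.mul_apply, smul_eq_mul]
    ring
  rw [expand]
  filter_upwards [condExp_add (hU.integrable_sq.sub (hUV.smul (2 : ℝ))) hV.integrable_sq m,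
    condExp_sub hU.integrable_sq (hUV.smul (2 : ℝ)) m, condExp_smul (2 : ℝ) (U * V) m]
    with ω h_add h_sub h_smul
  simp only [Pi.add_apply, Pi.sub_apply, Pi.smul_apply, smul_eq_mul] at h_add h_sub h_smul
  rw [h_add, h_sub, h_smul]

variable [IsFiniteMeasure P]

theorem condExp_mul_eq_mul_of_truncation_right {U V : Ω → ℝ}
    (hU : MemLp U 2 P) (hV : MemLp V 2 P)
    (h : ∀ n : ℕ, P[U * truncation V n | m] =ᵐ[P] P[U | m] * P[truncation V n | m]) :
    P[U * V | m] =ᵐ[P] P[U | m] * P[V | m] := by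
  have hEU : MemLp (P[U | m]) 2 P := hU.condExp one_le_two
  have hEU_meas : AEStronglyMeasurable[m] (P[U | m]) P :=
    stronglyMeasurable_condExp.aestronglyMeasurable
  have bound : ∀ (W : Ω → ℝ) (n : ℕ), ∀ᵐ ω ∂P, ‖W ω * truncation V n ω‖ ≤ |W ω * V ω| :=
    fun W n => .of_forall fun ω => by
      simpa only [Real.norm_eq_abs, abs_mul] using
        mul_le_mul_of_nonneg_left (abs_truncation_le_abs_self V n ω) (abs_nonneg (W ω))
  have pull_out : ∀ n : ℕ,
      P[P[U | m] * truncation V n | m] =ᵐ[P] P[U | m] * P[truncation V n | m] := fun n =>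
    condExp_mul_of_aestronglyMeasurable_left hEU_meas (hEU.integrable_mul (hV.truncation n))
      ((hV.truncation n).integrable one_le_two)
  have limit := tendsto_condExp_unique (m := m) (fun n => U * truncation V n)
    (fun n => P[U | m] * truncation V n) (U * V) (P[U | m] * V)
    (fun n => hU.integrable_mul (hV.truncation n))
    (fun n => hEU.integrable_mul (hV.truncation n))
    (.of_forall fun ω => (tendsto_truncation V ω).const_mul (U ω))
    (.of_forall fun ω => (tendsto_truncation V ω).const_mul _)
    _ (hU.integrable_mul hV).abs _ (hEU.integrable_mul hV).abs (bound U) (bound _)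
    (fun n => (h n).trans (pull_out n).symm)
  exact limit.trans (condExp_mul_of_aestronglyMeasurable_left hEU_meas
    (hEU.integrable_mul hV) (hV.integrable one_le_two))

theorem condExp_mul_eq_mul_of_truncation_left {U V : Ω → ℝ}
    (hU : MemLp U 2 P) (hV : MemLp V 2 P)
    (h : ∀ n : ℕ, P[truncation U n * V | m] =ᵐ[P] P[truncation U n | m] * P[V | m]) :
    P[U * V | m] =ᵐ[P] P[U | m] * P[V | m] := by
  simpa only [mul_comm] using condExp_mul_eq_mul_of_truncation_right hV hU
    fun n => by simpa only [mul_comm] using h n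

theorem condExp_mul_eq_mul_of_condIndep {X Xhat : Ω → ℝ}
    (hX : MemLp X 2 P) (hXhat : MemLp Xhat 2 P)
    (hCI : ∀ g h : ℝ → ℝ, Measurable g → Measurable h →
      (∃ C : ℝ, ∀ x, |g x| ≤ C) → (∃ C : ℝ, ∀ x, |h x| ≤ C) →
      (P[fun ω => g (X ω) * h (Xhat ω) | m]) =ᵐ[P]
        fun ω => (P[fun ω' => g (X ω') | m]) ω * (P[fun ω' => h (Xhat ω') | m]) ω) :
    P[X * Xhat | m] =ᵐ[P] P[X | m] * P[Xhat | m] := by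
  have truncate : ∀ A : ℝ, ∃ C : ℝ, ∀ x, |truncation id A x| ≤ C :=
    fun A => ⟨|A|, abs_truncation_le_bound id A⟩
  refine condExp_mul_eq_mul_of_truncation_left hX hXhat fun n => ?_
  refine condExp_mul_eq_mul_of_truncation_right (hX.truncation n) hXhat fun k => ?_
  exact hCI _ _ (measurable_truncation_id n) (measurable_truncation_id k) (truncate n) (truncate k)

end

theorem condExp_comp_ae_eq_of_condDistrib_ae_eq {Ω F β E : Type*} [MeasurableSpace Ω]
    {mF : MeasurableSpace F} [MeasurableSpace β] [StandardBorelSpace β] [Nonempty β]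
    [NormedAddCommGroup E] [NormedSpace ℝ E] [CompleteSpace E]
    {P : Measure Ω} [IsFiniteMeasure P] {Y : Ω → F} {Z W : Ω → β}
    (hY : Measurable Y) (hZ : AEMeasurable Z P) (hW : AEMeasurable W P)
    (hZW : ∀ᵐ y ∂(P.map Y), condDistrib Z Y P y = condDistrib W Y P y)
    {f : β → E} (hf : StronglyMeasurable f)
    (hfZ : Integrable (fun ω => f (Z ω)) P) (hfW : Integrable (fun ω => f (W ω)) P) :
    P[fun ω => f (Z ω) | mF.comap Y] =ᵐ[P] P[fun ω => f (W ω) | mF.comap Y] := by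
  filter_upwards [condExp_ae_eq_integral_condDistrib hY hZ hf hfZ,
    condExp_ae_eq_integral_condDistrib hY hW hf hfW, ae_of_ae_map hY.aemeasurable hZW]
    with ω hZω hWω hω
  rw [hZω, hWω, hω]

theorem stmt11_general
    {Ω F : Type*} [MeasurableSpace Ω]
    [mF : MeasurableSpace F]
    (P : Measure Ω) [IsProbabilityMeasure P]
    (X Xhat : Ω → ℝ) (Y : Ω → F)
    (hY : Measurable Y)
    (hX2 : MemLp X 2 P) (hXhat2 : MemLp Xhat 2 P)
    (hCI : ∀ g h : ℝ → ℝ, Measurable g → Measurable h →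
      (∃ C : ℝ, ∀ x, |g x| ≤ C) → (∃ C : ℝ, ∀ x, |h x| ≤ C) →
      (P[fun ω => g (X ω) * h (Xhat ω) | mF.comap Y]) =ᵐ[P]
        fun ω => (P[fun ω' => g (X ω') | mF.comap Y]) ω *
          (P[fun ω' => h (Xhat ω') | mF.comap Y]) ω)
    (hps : ∀ᵐ y ∂(P.map Y), condDistrib Xhat Y P y = condDistrib X Y P y) :
    (P[fun ω => (X ω - Xhat ω) ^ 2 | mF.comap Y]) =ᵐ[P]
      fun ω => 2 * ((P[fun ω' => X ω' ^ 2 | mF.comap Y]) ω -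
        ((P[X | mF.comap Y]) ω) ^ 2) := by
  have same_mean : P[Xhat | mF.comap Y] =ᵐ[P] P[X | mF.comap Y] :=
    condExp_comp_ae_eq_of_condDistrib_ae_eq hY hXhat2.aemeasurable hX2.aemeasurable hps
      stronglyMeasurable_id (hXhat2.integrable one_le_two) (hX2.integrable one_le_two)
  have same_second_moment :
      P[fun ω => Xhat ω ^ 2 | mF.comap Y] =ᵐ[P] P[fun ω => X ω ^ 2 | mF.comap Y] :=
    condExp_comp_ae_eq_of_condDistrib_ae_eq hY hXhat2.aemeasurable hX2.aemeasurable hps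
      (measurable_id.pow_const 2).stronglyMeasurable hXhat2.integrable_sq hX2.integrable_sq
  filter_upwards [condExp_sub_sq (m := mF.comap Y) hX2 hXhat2,
    condExp_mul_eq_mul_of_condIndep hX2 hXhat2 hCI, same_mean, same_second_moment]
    with ω h_sq h_mul h_mean h_second
  rw [h_sq, h_mul, Pi.mul_apply, h_mean, h_second]
  ring

/-- Let `X, X̂` be square-integrable real random variables and `Y` a random
vector such that `X` and `X̂` are conditionally independent given `σ(Y)`. If moreover `X̂` is a
posterior sampler, i.e. `p_{X̂|Y}(·|y) = p_{X|Y}(·|y)` for `p_Y`-almost every `y`, then almost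
surely `E[(X - X̂)²|Y] = 2·(E[X²|Y] - (E[X|Y])²)`: the conditional mean squared error equals
twice the conditional variance of `X` given `Y`. -/
theorem stmt11
    {Ω F : Type*} [MeasurableSpace Ω]
    [NormedAddCommGroup F] [NormedSpace ℝ F] [FiniteDimensional ℝ F]
    [mF : MeasurableSpace F] [BorelSpace F]
    (P : Measure Ω) [IsProbabilityMeasure P]
    (X Xhat : Ω → ℝ) (Y : Ω → F)
    (hX : Measurable X) (hXhat : Measurable Xhat) (hY : Measurable Y)
    (hX2 : MemLp X 2 P) (hXhat2 : MemLp Xhat 2 P)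
    (hCI : ∀ g h : ℝ → ℝ, Measurable g → Measurable h →
      (∃ C : ℝ, ∀ x, |g x| ≤ C) → (∃ C : ℝ, ∀ x, |h x| ≤ C) →
      (P[fun ω => g (X ω) * h (Xhat ω) | mF.comap Y]) =ᵐ[P]
        fun ω => (P[fun ω' => g (X ω') | mF.comap Y]) ω *
          (P[fun ω' => h (Xhat ω') | mF.comap Y]) ω)
    (hps : ∀ᵐ y ∂(P.map Y), condDistrib Xhat Y P y = condDistrib X Y P y) :
    (P[fun ω => (X ω - Xhat ω) ^ 2 | mF.comap Y]) =ᵐ[P]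
      fun ω => 2 * ((P[fun ω' => X ω' ^ 2 | mF.comap Y]) ω -
        ((P[X | mF.comap Y]) ω) ^ 2) :=
  stmt11_general (mF := mF) P X Xhat Y hY hX2 hXhat2 hCI hps
end
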